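/- Let G be a finite group and H a subgroup of G. For each subgroup H, define the probability measure P_H on Irr(G) by P_H(ρ) = (d_ρ/|G|)·Σ_{h∈H} χ^ρ(h). Let C_1,…,C_k denote the non-identity conjugacy classes of G. Then ||P_H − P_{{e}}||_TV ≤ (1/2)·Σ_{i=1}^k |C_i ∩ H|·|C_i|^{−1/2}, where P_{{e}} is the measure corresponding to the trivial subgroup (i.e., the Plancherel measure ρ ↦ d_ρ²/|G|). -/

import Mathlib

open CategoryTheory
open scoped BigOperators Classical

noncomputable section

/-- The tensor-product Markov chain transition matrix on `Irr(G)` defined by a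
representation `η`: from `λ` move to `ρ` with probability
`d_ρ · m_ρ(λ ⊗ η) / (d_λ · d_η)`, where
`m_ρ(λ ⊗ η) = (1/|G|) Σ_g χ^ρ(g) χ^η(g) conj(χ^λ(g))`. Here `V : ι → FDRep ℂ G`
enumerates the irreducible representations of `G`, and `d_λ = χ^λ(1)`. -/
def tensorChain {G : Type} [Group G] [Fintype G] {ι : Type} [Fintype ι]
    (V : ι → FDRep ℂ G) (η : FDRep ℂ G) : Matrix ι ι ℂ :=
  Matrix.of fun l r =>
    (V r).character 1 *
      ((1 / (Fintype.card G : ℂ)) *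
        ∑ g : G, (V r).character g * η.character g * (starRingEnd ℂ) ((V l).character g)) /
      ((V l).character 1 * η.character 1)

/-- The Plancherel measure on `Irr(G)`: `π(λ) = d_λ² / |G|`. -/
def plancherel {G : Type} [Group G] [Fintype G] {ι : Type} [Fintype ι]
    (V : ι → FDRep ℂ G) : ι → ℂ :=
  fun i => ((V i).character 1) ^ 2 / (Fintype.card G : ℂ)

/-- Total variation distance between two (complex-valued) measures on a finite set. -/
def tvDist {ι : Type} [Fintype ι] (P Q : ι → ℂ) : ℝ :=
  (1 / 2) * ∑ x : ι, ‖P x - Q x‖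

/-- The eigenfunction `f_C(ρ) = |C|^{1/2} χ^ρ(C) / d_ρ` attached to a conjugacy class. -/
def eigFun {G : Type} [Group G] [Fintype G] {ι : Type} [Fintype ι]
    (V : ι → FDRep ℂ G) (C : ConjClasses G) : ι → ℂ :=
  fun i => (Real.sqrt (Nat.card C.carrier) : ℂ) * (V i).character (Quotient.out C) /
    (V i).character 1

/-- The probability that the random walk on `G` generated by the uniform measure on the
set `C`, started at the identity, lies in the set `T` after `s` steps; i.e. the
probability that a product of `s` i.i.d. uniform elements of `C` lies in `T`. -/
def classWalkProb {G : Type} [Group G] [Fintype G] (s : ℕ) (C T : Set G) : ℝ :=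
  (Nat.card {v : Fin s → G // (∀ k, v k ∈ C) ∧ (List.ofFn v).prod ∈ T}) /
    (Nat.card C : ℝ) ^ s

/-- The number of fixed points of a permutation. -/
def numFixedPoints {n : ℕ} (g : Equiv.Perm (Fin n)) : ℕ :=
  (Finset.univ.filter fun x => g x = x).card

/-- The dimension of the fixed space of `g ∈ GL(n,q)`. -/
def fixDim {n : ℕ} {F : Type} [Field F] (g : GL (Fin n) F) : ℕ :=
  Module.finrank F (LinearMap.ker (Matrix.toLin' ((g : Matrix (Fin n) (Fin n) F) - 1)))

/-- The quantum Fourier sampling measure `P_H(ρ) = (d_ρ/|G|) Σ_{h ∈ H} χ^ρ(h)`. -/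
def fourierSample {G : Type} [Group G] [Fintype G] {ι : Type} [Fintype ι]
    (V : ι → FDRep ℂ G) (H : Subgroup G) : ι → ℂ :=
  fun ρ => (V ρ).character 1 / (Fintype.card G : ℂ) * ∑ h : H, (V ρ).character (h : G)

/-!
Writing `S = H ∖ {1}`, the difference `P_H(ρ) - P_{e}(ρ)` is `(d_ρ/|G|) Σ_{h ∈ S} χ^ρ(h)`, so by
the triangle inequality it suffices to show `Σ_ρ d_ρ |χ^ρ(h)| ≤ |G| / √|C(h)|` for every `h`.
This is Cauchy–Schwarz combined with `Σ_ρ |χ^ρ(h)|² ≤ |G| / |C(h)|` (and its case `h = 1`,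
`Σ_ρ d_ρ² ≤ |G|`), which is Bessel's inequality for the orthonormal family of irreducible
characters tested against the indicator function of the conjugacy class `C(h)`. Finally the
elements of `S` are grouped by conjugacy class.
-/

open Matrix FDRep ComplexConjugate
open scoped ComplexOrder

/- `P = Σ_x (M x)ᴴ (M x)` is a positive definite form for which every `M g` is unitary, so `(M g)ᴴ`
is conjugate to `(M g)⁻¹ = M g⁻¹`. -/
theorem MonoidHom.trace_apply_inv {G n : Type*} [Group G] [Fintype G] [Fintype n] [DecidableEq n]
    (M : G →* Matrix n n ℂ) (g : G) : (M g⁻¹).trace = star (M g).trace := by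
  have hP : (∑ x, (M x)ᴴ * M x).PosDef := by
    rw [← Finset.add_sum_erase _ _ (Finset.mem_univ 1), map_one, conjTranspose_one, one_mul]
    exact PosDef.one.add_posSemidef
      (posSemidef_sum _ fun x _ => posSemidef_conjTranspose_mul_self (M x))
  set P := ∑ x, (M x)ᴴ * M x
  have hP_invariant : (M g)ᴴ * P * M g = P := by
    simp only [P, Finset.mul_sum, Finset.sum_mul]
    exact Fintype.sum_equiv (Equiv.mulRight g) _ _ fun x => by
      simp [conjTranspose_mul, mul_assoc]
  have hP_det : IsUnit P.det := (isUnit_iff_isUnit_det P).1 hP.isUnit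
  have hcomm : (M g)ᴴ * P = P * M g⁻¹ := by
    conv_rhs => rw [← hP_invariant, mul_assoc, ← map_mul, mul_inv_cancel, map_one, mul_one]
  calc (M g⁻¹).trace = (P * M g⁻¹ * P⁻¹).trace := by
        rw [trace_mul_cycle, nonsing_inv_mul _ hP_det, one_mul]
    _ = star (M g).trace := by
        rw [← hcomm, mul_assoc, mul_nonsing_inv _ hP_det, mul_one, trace_conjTranspose]

theorem Representation.char_inv {G V : Type*} [Group G] [Fintype G] [AddCommGroup V]
    [Module ℂ V] [FiniteDimensional ℂ V] (ρ : Representation ℂ G V) (g : G) :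
    ρ.character g⁻¹ = conj (ρ.character g) := by
  let b := Module.finBasis ℂ V
  simp only [Representation.character, LinearMap.trace_eq_matrix_trace ℂ b]
  exact ((LinearMap.toMatrixAlgEquiv b).toMonoidHom.comp ρ).trace_apply_inv g

theorem FDRep.char_inv {G : Type} [Group G] [Fintype G] (W : FDRep ℂ G) (g : G) :
    W.character g⁻¹ = conj (W.character g) :=
  Representation.char_inv W.ρ g

theorem ConjClasses.carrier_mk_one {α : Type*} [Monoid α] :
    (ConjClasses.mk (1 : α)).carrier = {1} := by
  ext a
  rw [ConjClasses.mem_carrier_iff_mk_eq, ConjClasses.mk_eq_mk_iff_isConj, isConj_one_left,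
    Set.mem_singleton_iff]

theorem Subgroup.sum_eq_add_sum_erase_one {G M : Type*} [Group G] [Fintype G] [AddCommMonoid M]
    (H : Subgroup G) (f : G → M) :
    ∑ h : H, f h = f 1 + ∑ g ∈ ({g | g ∈ H} : Finset G).erase 1, f g := by
  rw [← Finset.sum_subtype ({g | g ∈ H} : Finset G) (fun g => by simp) f,
    Finset.add_sum_erase _ _ (by simp [H.one_mem])]

theorem Subgroup.sum_erase_one_eq_sum_conjClasses {G M : Type*} [Group G] [Fintype G]
    [Fintype (ConjClasses G)] [DecidableEq (ConjClasses G)] [AddCommMonoid M]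
    (H : Subgroup G) (f : ConjClasses G → M) :
    ∑ g ∈ ({g | g ∈ H} : Finset G).erase 1, f (ConjClasses.mk g) =
      ∑ C ∈ Finset.univ.filter (fun C : ConjClasses G => C ≠ ConjClasses.mk 1),
        Nat.card (C.carrier ∩ (H : Set G) : Set G) • f C := by
  have hmaps : ∀ g ∈ ({g | g ∈ H} : Finset G).erase 1,
      ConjClasses.mk g ∈ Finset.univ.filter (fun C : ConjClasses G => C ≠ ConjClasses.mk 1) := by
    intro g hg
    simpa [ConjClasses.mk_eq_mk_iff_isConj, isConj_one_left] using (Finset.mem_erase.1 hg).1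
  rw [← Finset.sum_fiberwise_of_maps_to' hmaps]
  refine Finset.sum_congr rfl fun C hC => ?_
  rw [Finset.sum_const, Nat.card_eq_card_toFinset]
  congr 2
  ext g
  simp only [Finset.mem_filter, Finset.mem_erase, Finset.mem_univ, true_and, Set.mem_toFinset,
    Set.mem_inter_iff, ConjClasses.mem_carrier_iff_mk_eq, SetLike.mem_coe]
  refine ⟨fun ⟨⟨_, hgH⟩, hgC⟩ => ⟨hgC, hgH⟩, fun ⟨hgC, hgH⟩ => ⟨⟨?_, hgH⟩, hgC⟩⟩
  rintro rfl
  exact (Finset.mem_filter.1 hC).2 hgC.symm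

section Characters

variable {G : Type} [Group G] [Fintype G] {ι : Type} {V : ι → FDRep ℂ G}

theorem FDRep.orthonormal_char (hirr : ∀ i, Simple (V i))
    (hdistinct : ∀ i j : ι, Nonempty (V i ≅ V j) → i = j) :
    Orthonormal ℂ fun i =>
      ((Real.sqrt (Fintype.card G) : ℂ)⁻¹ • WithLp.toLp 2 (V i).character : EuclideanSpace ℂ G) := by
  rw [orthonormal_iff_ite]
  intro i j
  have hN : (0 : ℝ) < Fintype.card G := by exact_mod_cast Fintype.card_pos
  have hinner : (inner ℂ (WithLp.toLp 2 (V i).character : EuclideanSpace ℂ G)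
      (WithLp.toLp 2 (V j).character) : ℂ) = ∑ a, (V j).character a * (V i).character a⁻¹ := by
    simp [PiLp.inner_apply, FDRep.char_inv]
  have horth := FDRep.char_orthonormal (V j) (V i)
  rw [Nat.card_eq_fintype_card] at horth
  rw [inner_smul_left, inner_smul_right, hinner, ← mul_assoc, map_inv₀, Complex.conj_ofReal,
    ← mul_inv, ← Complex.ofReal_mul, Real.mul_self_sqrt hN.le, Complex.ofReal_natCast, horth]
  by_cases hij : i = j
  · subst hij; simp
  · rw [if_neg hij, if_neg fun h => hij (hdistinct _ _ (Nonempty.map Iso.symm h))]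

variable [Fintype ι]

theorem FDRep.sum_norm_char_sq_le (hirr : ∀ i, Simple (V i))
    (hdistinct : ∀ i j : ι, Nonempty (V i ≅ V j) → i = j) (g : G) :
    ∑ i, ‖(V i).character g‖ ^ 2 ≤ Fintype.card G / Nat.card (ConjClasses.mk g).carrier := by
  set C := (ConjClasses.mk g).carrier.toFinset
  have hN : (0 : ℝ) < Fintype.card G := by exact_mod_cast Fintype.card_pos
  have hC : (0 : ℝ) < C.card := by
    exact_mod_cast Finset.card_pos.2 ⟨g, by simp [C, ConjClasses.mem_carrier_iff_mk_eq]⟩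
  let x : EuclideanSpace ℂ G := WithLp.toLp 2 fun a => if a ∈ C then 1 else 0
  have hx : ‖x‖ ^ 2 = C.card := by
    simp [x, EuclideanSpace.norm_sq_eq, apply_ite]
  have hinner : ∀ i, ‖(inner ℂ ((Real.sqrt (Fintype.card G) : ℂ)⁻¹ •
      WithLp.toLp 2 (V i).character : EuclideanSpace ℂ G) x : ℂ)‖ ^ 2 =
      C.card ^ 2 / Fintype.card G * ‖(V i).character g‖ ^ 2 := by
    intro i
    have hclass : ∀ a ∈ C, conj ((V i).character a) = conj ((V i).character g) := by
      intro a ha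
      obtain ⟨c, rfl⟩ := isConj_iff.1 (ConjClasses.mk_eq_mk_iff_isConj.1
        (ConjClasses.mem_carrier_iff_mk_eq.1 (Set.mem_toFinset.1 ha)).symm)
      rw [FDRep.char_conj]
    simp only [x, PiLp.inner_apply, inner_smul_left, RCLike.inner_apply, ite_mul, one_mul,
      zero_mul, Finset.sum_ite_mem, Finset.univ_inter, Finset.sum_congr rfl hclass,
      Finset.sum_const, nsmul_eq_mul, norm_mul, norm_inv, Complex.norm_conj, Complex.norm_real,
      Complex.norm_natCast, Real.norm_of_nonneg (Real.sqrt_nonneg _), mul_pow, inv_pow,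
      Real.sq_sqrt hN.le]
    ring
  have hbessel := (FDRep.orthonormal_char hirr hdistinct).sum_inner_products_le
    (s := Finset.univ) x
  rw [Finset.sum_congr rfl fun i _ => hinner i, ← Finset.mul_sum, hx, div_mul_eq_mul_div,
    div_le_iff₀ hN] at hbessel
  rw [Nat.card_eq_card_toFinset, le_div_iff₀ hC]
  nlinarith

theorem FDRep.sum_norm_char_one_mul_norm_char_le (hirr : ∀ i, Simple (V i))
    (hdistinct : ∀ i j : ι, Nonempty (V i ≅ V j) → i = j) (g : G) :
    ∑ i, ‖(V i).character 1‖ * ‖(V i).character g‖ ≤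
      Fintype.card G / Real.sqrt (Nat.card (ConjClasses.mk g).carrier) := by
  have hdim := FDRep.sum_norm_char_sq_le hirr hdistinct (1 : G)
  rw [ConjClasses.carrier_mk_one, Nat.card_unique, Nat.cast_one, div_one] at hdim
  calc ∑ i, ‖(V i).character 1‖ * ‖(V i).character g‖
      ≤ Real.sqrt (∑ i, ‖(V i).character 1‖ ^ 2) * Real.sqrt (∑ i, ‖(V i).character g‖ ^ 2) :=
        Real.sum_mul_le_sqrt_mul_sqrt _ _ _
    _ ≤ Real.sqrt (Fintype.card G) *
          Real.sqrt (Fintype.card G / Nat.card (ConjClasses.mk g).carrier) := by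
        gcongr
        exact FDRep.sum_norm_char_sq_le hirr hdistinct g
    _ = Fintype.card G / Real.sqrt (Nat.card (ConjClasses.mk g).carrier) := by
        rw [Real.sqrt_div' _ (Nat.cast_nonneg _), ← mul_div_assoc,
          Real.mul_self_sqrt (Nat.cast_nonneg _)]

theorem fourierSample_sub_fourierSample_bot (H : Subgroup G) (i : ι) :
    fourierSample V H i - fourierSample V ⊥ i =
      (V i).character 1 / Fintype.card G *
        ∑ g ∈ ({g | g ∈ H} : Finset G).erase 1, (V i).character g := by
  have hbot : ({g | g ∈ (⊥ : Subgroup G)} : Finset G).erase 1 = ∅ := by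
    ext g
    simp [Subgroup.mem_bot]
  simp only [fourierSample, Subgroup.sum_eq_add_sum_erase_one, hbot, Finset.sum_empty]
  ring

theorem tvDist_fourierSample_bot_le (hirr : ∀ i, Simple (V i))
    (hdistinct : ∀ i j : ι, Nonempty (V i ≅ V j) → i = j) (H : Subgroup G) :
    tvDist (fourierSample V H) (fourierSample V ⊥) ≤
      1 / 2 * ∑ g ∈ ({g | g ∈ H} : Finset G).erase 1,
        (Real.sqrt (Nat.card (ConjClasses.mk g).carrier))⁻¹ := by
  have hN : (0 : ℝ) < Fintype.card G := by exact_mod_cast Fintype.card_pos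
  unfold tvDist
  gcongr
  calc ∑ i, ‖fourierSample V H i - fourierSample V ⊥ i‖
      ≤ ∑ i, ∑ g ∈ ({g | g ∈ H} : Finset G).erase 1,
          ‖(V i).character 1‖ * ‖(V i).character g‖ / Fintype.card G := by
        gcongr with i
        rw [fourierSample_sub_fourierSample_bot, norm_mul, norm_div, Complex.norm_natCast,
          div_mul_eq_mul_div, ← Finset.sum_div, ← Finset.mul_sum]
        gcongr
        exact norm_sum_le _ _
    _ = ∑ g ∈ ({g | g ∈ H} : Finset G).erase 1,
          (∑ i, ‖(V i).character 1‖ * ‖(V i).character g‖) / Fintype.card G := by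
        rw [Finset.sum_comm]
        simp only [Finset.sum_div]
    _ ≤ ∑ g ∈ ({g | g ∈ H} : Finset G).erase 1,
          Fintype.card G / Real.sqrt (Nat.card (ConjClasses.mk g).carrier) / Fintype.card G := by
        gcongr with g
        exact FDRep.sum_norm_char_one_mul_norm_char_le hirr hdistinct g
    _ = ∑ g ∈ ({g | g ∈ H} : Finset G).erase 1,
          (Real.sqrt (Nat.card (ConjClasses.mk g).carrier))⁻¹ := by
        simp only [div_div_cancel_left' hN.ne']

end Characters

theorem fourier_sample_tv_le_general {G : Type} [Group G] [Fintype G]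
    [Fintype (ConjClasses G)] [DecidableEq (ConjClasses G)]
    {ι : Type} [Fintype ι]
    (V : ι → FDRep ℂ G)
    (hirr : ∀ i, CategoryTheory.Simple (V i))
    (hdistinct : ∀ i j : ι, Nonempty (V i ≅ V j) → i = j)
    (H : Subgroup G) :
    tvDist (fourierSample V H) (fourierSample V ⊥) ≤
      (1 / 2) * ∑ C ∈ Finset.univ.filter
          (fun C : ConjClasses G => C ≠ ConjClasses.mk 1),
        (Nat.card (C.carrier ∩ (H : Set G) : Set G) : ℝ) /
          Real.sqrt (Nat.card C.carrier) := by
  calc tvDist (fourierSample V H) (fourierSample V ⊥)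
      ≤ 1 / 2 * ∑ g ∈ ({g | g ∈ H} : Finset G).erase 1,
          (Real.sqrt (Nat.card (ConjClasses.mk g).carrier))⁻¹ :=
        tvDist_fourierSample_bot_le hirr hdistinct H
    _ = _ := by
        congr 1
        convert Subgroup.sum_erase_one_eq_sum_conjClasses H
            (fun C : ConjClasses G => (Real.sqrt (Nat.card C.carrier))⁻¹) using 2 with C
        rw [nsmul_eq_mul, div_eq_mul_inv]

/-- Proposition (Kempe–Shalev): with `P_H(ρ) = (d_ρ/|G|) Σ_(h∈H) χ^ρ(h)` and
`C_1, …, C_k` the non-identity conjugacy classes of `G`,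
`‖P_H − P_(e)‖_TV ≤ (1/2) Σ_i |C_i ∩ H| |C_i|^(−1/2)`,
where `P_(e)` is the measure for the trivial subgroup (the Plancherel measure). -/
theorem fourier_sample_tv_le {G : Type} [Group G] [Fintype G]
    [Fintype (ConjClasses G)] [DecidableEq (ConjClasses G)]
    {ι : Type} [Fintype ι] [DecidableEq ι]
    (V : ι → FDRep ℂ G)
    (hirr : ∀ i, CategoryTheory.Simple (V i))
    (hdistinct : ∀ i j : ι, Nonempty (V i ≅ V j) → i = j)
    (hcomplete : ∀ W : FDRep ℂ G, CategoryTheory.Simple W → ∃ i, Nonempty (W ≅ V i))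
    (H : Subgroup G) :
    tvDist (fourierSample V H) (fourierSample V ⊥) ≤
      (1 / 2) * ∑ C ∈ Finset.univ.filter
          (fun C : ConjClasses G => C ≠ ConjClasses.mk 1),
        (Nat.card (C.carrier ∩ (H : Set G) : Set G) : ℝ) /
          Real.sqrt (Nat.card C.carrier) :=
  fourier_sample_tv_le_general V hirr hdistinct H

end
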